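/- Let A ∈ ℝ^{m×n}, b ∈ ℝ^m, c ∈ ℝⁿ, and suppose both the primal min{c·x : Ax ≥ b, x ≥ 0} and dual max{b·u : A^T u ≤ c, u ≥ 0} are feasible. Then both have optimal solutions and their optimal values are equal. -/

import Mathlib

/-!
If `x` and `u` are feasible with `c ⬝ᵥ x ≤ b ⬝ᵥ u`, weak duality makes both optimal with equal
values. If this system in `(x, u) ≥ 0` had no solution, Farkas' lemma would give `p, r ≥ 0` and
`μ ≥ 0` with `p A ≤ μ c`, `μ b ≤ A r` and `b ⬝ᵥ p > c ⬝ᵥ r`. For `μ > 0` this contradicts weak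
duality for `(r, p)`; for `μ = 0`, weak duality against feasible points `x₀`, `u₀` gives
`b ⬝ᵥ p ≤ 0 ≤ c ⬝ᵥ r`.

Farkas' lemma is the separation theorem for closed convex cones; a finitely generated cone is closed
because, by Carathéodory's theorem, it is a finite union of images of the nonnegative orthant under
injective linear maps.
-/

open Matrix

section Caratheodory

variable {κ E : Type*} [AddCommGroup E] [Module ℝ E] {v : κ → E}

lemma PointedCone.mem_hull_range_iff_exists_nonneg [Fintype κ] {x : E} :
    x ∈ PointedCone.hull ℝ (Set.range v) ↔ ∃ w : κ → ℝ, 0 ≤ w ∧ ∑ j, w j • v j = x := by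
  rw [Submodule.mem_span_range_iff_exists_fun]
  constructor
  · rintro ⟨w, rfl⟩
    exact ⟨fun j => w j, fun j => (w j).2, rfl⟩
  · rintro ⟨w, hw, rfl⟩
    exact ⟨fun j => ⟨w j, hw j⟩, rfl⟩

lemma exists_sum_smul_eq_of_sum_smul_eq_zero {s : Finset κ} {w g : κ → ℝ}
    (hw : ∀ j ∈ s, 0 ≤ w j) (hg : ∑ j ∈ s, g j • v j = 0) (hpos : ∃ j ∈ s, 0 < g j) :
    ∃ j ∈ s, ∃ w' : κ → ℝ, (∀ i ∈ s, 0 ≤ w' i) ∧ w' j = 0 ∧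
      ∑ i ∈ s, w' i • v i = ∑ i ∈ s, w i • v i := by
  obtain ⟨j, hj, hmin⟩ := (s.filter (0 < g ·)).exists_min_image (fun i => w i / g i)
    (by simpa [Finset.Nonempty] using hpos)
  rw [Finset.mem_filter] at hj
  -- the largest step `τ` along `-g` that keeps the coefficients nonnegative
  set τ := w j / g j
  have hτ : 0 ≤ τ := div_nonneg (hw j hj.1) hj.2.le
  refine ⟨j, hj.1, w - τ • g, fun i hi => ?_, ?_, ?_⟩
  · rcases le_or_gt (g i) 0 with hgi | hgi
    · have hwi := hw i hi
      simp only [Pi.sub_apply, Pi.smul_apply, smul_eq_mul]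
      nlinarith
    · have hτi := hmin i (Finset.mem_filter.2 ⟨hi, hgi⟩)
      rw [le_div_iff₀ hgi] at hτi
      simpa using hτi
  · simp [τ, div_mul_cancel₀ _ hj.2.ne']
  · simp [sub_smul, Finset.sum_sub_distrib, mul_smul, ← Finset.smul_sum, hg]

lemma exists_sum_erase_smul_eq_of_not_linearIndepOn [DecidableEq κ] {s : Finset κ} {w : κ → ℝ}
    (hw : ∀ j ∈ s, 0 ≤ w j) (hs : ¬ LinearIndepOn ℝ v s) :
    ∃ j ∈ s, ∃ w' : κ → ℝ, (∀ i ∈ s.erase j, 0 ≤ w' i) ∧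
      ∑ i ∈ s.erase j, w' i • v i = ∑ i ∈ s, w i • v i := by
  obtain ⟨g, hg, i, hi, hgi⟩ := not_linearIndepOn_finset_iff.1 hs
  obtain ⟨j, hj, w', hw', hw'j, hsum⟩ : ∃ j ∈ s, ∃ w' : κ → ℝ, (∀ i ∈ s, 0 ≤ w' i) ∧ w' j = 0 ∧
      ∑ i ∈ s, w' i • v i = ∑ i ∈ s, w i • v i := by
    rcases hgi.lt_or_gt with hneg | hpos
    · refine exists_sum_smul_eq_of_sum_smul_eq_zero (g := -g) hw ?_ ⟨i, hi, by simpa⟩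
      simp [neg_smul, hg]
    · exact exists_sum_smul_eq_of_sum_smul_eq_zero hw hg ⟨i, hi, hpos⟩
  refine ⟨j, hj, w', fun i hi => hw' i (Finset.mem_of_mem_erase hi), ?_⟩
  rw [Finset.sum_erase _ (by simp [hw'j]), hsum]

/-- Carathéodory's theorem for cones. -/
theorem exists_linearIndepOn_sum_smul_eq [DecidableEq κ] (s : Finset κ) {w : κ → ℝ}
    (hw : ∀ j ∈ s, 0 ≤ w j) :
    ∃ t ⊆ s, LinearIndepOn ℝ v t ∧ ∃ w' : κ → ℝ, (∀ j ∈ t, 0 ≤ w' j) ∧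
      ∑ j ∈ t, w' j • v j = ∑ j ∈ s, w j • v j := by
  induction s using Finset.strongInduction generalizing w with
  | H s ih =>
    by_cases hs : LinearIndepOn ℝ v s
    · exact ⟨s, subset_rfl, hs, w, hw, rfl⟩
    obtain ⟨j, hj, w', hw', hsum⟩ := exists_sum_erase_smul_eq_of_not_linearIndepOn hw hs
    obtain ⟨t, hts, ht, w'', hw'', hsum'⟩ := ih _ (Finset.erase_ssubset hj) hw'
    exact ⟨t, hts.trans (Finset.erase_subset j s), ht, w'', hw'', hsum'.trans hsum⟩

end Caratheodory

section Closed

variable {κ E : Type*} [AddCommGroup E] [Module ℝ E] [TopologicalSpace E] [IsTopologicalAddGroup E]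
  [ContinuousSMul ℝ E] [T2Space E]

lemma LinearIndependent.isClosed_image_nonneg [Fintype κ] {v : κ → E}
    (hv : LinearIndependent ℝ v) :
    IsClosed (Fintype.linearCombination ℝ v '' {w | 0 ≤ w}) :=
  (LinearMap.isClosedEmbedding_of_injective (LinearMap.ker_eq_bot.2
    hv.fintypeLinearCombination_injective)).isClosedMap _ isClosed_Ici

theorem PointedCone.isClosed_hull_range [Finite κ] [FiniteDimensional ℝ E] (v : κ → E) :
    IsClosed (PointedCone.hull ℝ (Set.range v) : Set E) := by
  classical
  have := Fintype.ofFinite κ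
  have hcone : (PointedCone.hull ℝ (Set.range v) : Set E) = ⋃ (t : Finset κ)
      (_ : LinearIndepOn ℝ v t), Fintype.linearCombination ℝ (fun j : t => v j) '' {w | 0 ≤ w} := by
    ext x
    simp only [SetLike.mem_coe, Set.mem_iUnion, Set.mem_image, Fintype.linearCombination_apply]
    constructor
    · rw [PointedCone.mem_hull_range_iff_exists_nonneg]
      rintro ⟨w, hw, rfl⟩
      obtain ⟨t, -, ht, w', hw', hsum⟩ :=
        exists_linearIndepOn_sum_smul_eq (v := v) Finset.univ fun j _ => hw j
      exact ⟨t, ht, fun j => w' j, fun j => hw' j j.2,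
        (t.sum_coe_sort fun j => w' j • v j).trans hsum⟩
    · rintro ⟨t, -, w, hw, rfl⟩
      exact Submodule.sum_mem _ fun j _ =>
        PointedCone.smul_mem _ (hw j) (PointedCone.subset_hull ⟨j, rfl⟩)
  rw [hcone]
  exact isClosed_iUnion_of_finite fun t => isClosed_iUnion_of_finite fun ht =>
    ht.linearIndependent.isClosed_image_nonneg

end Closed

section Farkas

variable {ι κ : Type*} [Fintype ι] [Fintype κ]

lemma StrongDual.apply_eq_dotProduct [DecidableEq ι] (f : StrongDual ℝ (ι → ℝ)) (x : ι → ℝ) :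
    f x = x ⬝ᵥ fun i => f (Pi.single i 1) := by
  rw [show f x = (f : (ι → ℝ) →ₗ[ℝ] ℝ) x from rfl, LinearMap.pi_apply_eq_sum_univ]
  simp only [dotProduct, smul_eq_mul]
  congr! with i j
  simp [Pi.single_apply, eq_comm]

/-- Farkas' lemma for a finitely generated cone. -/
theorem exists_dotProduct_neg_of_notMem_hull (v : κ → ι → ℝ) {d : ι → ℝ}
    (hd : d ∉ PointedCone.hull ℝ (Set.range v)) :
    ∃ y : ι → ℝ, (∀ j, 0 ≤ v j ⬝ᵥ y) ∧ d ⬝ᵥ y < 0 := by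
  classical
  let C : ProperCone ℝ (ι → ℝ) := ⟨_, PointedCone.isClosed_hull_range v⟩
  obtain ⟨f, hf, hfd⟩ := C.hyperplane_separation_point hd
  refine ⟨fun i => f (Pi.single i 1), fun j => ?_, ?_⟩
  · rw [← StrongDual.apply_eq_dotProduct]
    exact hf _ (PointedCone.subset_hull ⟨j, rfl⟩)
  · rwa [← StrongDual.apply_eq_dotProduct]

theorem Matrix.exists_nonneg_vecMul_nonpos_of_not_exists [DecidableEq ι] (M : Matrix ι κ ℝ)
    (q : ι → ℝ) (h : ¬ ∃ z, 0 ≤ z ∧ q ≤ M *ᵥ z) :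
    ∃ y, 0 ≤ y ∧ y ᵥ* M ≤ 0 ∧ 0 < q ⬝ᵥ y := by
  let v : κ ⊕ ι → ι → ℝ := Sum.elim (fun j => Mᵀ j) (fun i => -Pi.single i 1)
  have hq : q ∉ PointedCone.hull ℝ (Set.range v) := by
    rw [PointedCone.mem_hull_range_iff_exists_nonneg]
    rintro ⟨w, hw, hwq⟩
    refine h ⟨w ∘ Sum.inl, fun j => hw _, fun i => ?_⟩
    have hslack : q i = (M *ᵥ (w ∘ Sum.inl)) i - w (Sum.inr i) := by
      simp [← hwq, v, Fintype.sum_sum_type, mulVec, dotProduct, Pi.single_apply, mul_comm,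
        sub_eq_add_neg]
    have hslack_nonneg : 0 ≤ w (Sum.inr i) := hw _
    linarith
  obtain ⟨y, hy, hqy⟩ := exists_dotProduct_neg_of_notMem_hull v hq
  refine ⟨-y, fun i => ?_, fun j => ?_, by simpa using hqy⟩
  · simpa [v] using hy (Sum.inr i)
  · simpa [v, vecMul, dotProduct, mul_comm] using hy (Sum.inl j)

end Farkas

section Duality

variable {ι κ R : Type*} [Fintype ι] [Fintype κ]

section Ring

variable [CommRing R] {A : Matrix ι κ R} {b : ι → R} {c : κ → R}

/-- The coefficient matrix of the system `A x ≥ b`, `-Aᵀ u ≥ -c`, `b ⬝ᵥ u - c ⬝ᵥ x ≥ 0` in the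
unknowns `(x, u)`, whose nonnegative solutions are pairs of optimal solutions. -/
def primalDualMatrix (A : Matrix ι κ R) (b : ι → R) (c : κ → R) :
    Matrix ((ι ⊕ κ) ⊕ Unit) (κ ⊕ ι) R :=
  fromRows (fromBlocks A 0 0 (-Aᵀ)) (replicateRow Unit (Sum.elim (-c) b))

def primalDualBound (b : ι → R) (c : κ → R) : (ι ⊕ κ) ⊕ Unit → R :=
  Sum.elim (Sum.elim b (-c)) 0

lemma vecMul_primalDualMatrix (y : (ι ⊕ κ) ⊕ Unit → R) :
    y ᵥ* primalDualMatrix A b c =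
      Sum.elim ((y ∘ Sum.inl ∘ Sum.inl) ᵥ* A - y (Sum.inr ()) • c)
        (y (Sum.inr ()) • b - A *ᵥ (y ∘ Sum.inl ∘ Sum.inr)) := by
  have hrow : (y ∘ Sum.inr) ᵥ* replicateRow Unit (Sum.elim (-c) b) =
      y (Sum.inr ()) • Sum.elim (-c) b := by
    ext j
    simp [vecMul, dotProduct]
  rw [primalDualMatrix, vecMul_fromRows, vecMul_fromBlocks, hrow]
  ext (j | i) <;>
    simp [vecMul_neg, vecMul_transpose, sub_eq_add_neg, add_comm, Function.comp_assoc]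

lemma primalDualBound_dotProduct (y : (ι ⊕ κ) ⊕ Unit → R) :
    primalDualBound b c ⬝ᵥ y = b ⬝ᵥ (y ∘ Sum.inl ∘ Sum.inl) - c ⬝ᵥ (y ∘ Sum.inl ∘ Sum.inr) := by
  simp [primalDualBound, dotProduct, Fintype.sum_sum_type, sub_eq_add_neg]

end Ring

section OrderedRing

variable [CommRing R] [PartialOrder R] [IsOrderedRing R] {A : Matrix ι κ R} {b : ι → R}
  {c : κ → R}

theorem weak_duality_smul {s t : R} {x : κ → R} {u : ι → R} (hx : s • b ≤ A *ᵥ x) (hx₀ : 0 ≤ x)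
    (hu : u ᵥ* A ≤ t • c) (hu₀ : 0 ≤ u) : s * (b ⬝ᵥ u) ≤ t * (c ⬝ᵥ x) :=
  calc s * (b ⬝ᵥ u) = (s • b) ⬝ᵥ u := (smul_dotProduct s b u).symm
    _ ≤ (A *ᵥ x) ⬝ᵥ u := dotProduct_le_dotProduct_of_nonneg_right hx hu₀
    _ = (u ᵥ* A) ⬝ᵥ x := by rw [dotProduct_comm, dotProduct_mulVec]
    _ ≤ (t • c) ⬝ᵥ x := dotProduct_le_dotProduct_of_nonneg_right hu hx₀
    _ = t * (c ⬝ᵥ x) := smul_dotProduct t c x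

theorem weak_duality {x : κ → R} {u : ι → R} (hx : b ≤ A *ᵥ x) (hx₀ : 0 ≤ x)
    (hu : u ᵥ* A ≤ c) (hu₀ : 0 ≤ u) : b ⬝ᵥ u ≤ c ⬝ᵥ x := by
  simpa using weak_duality_smul (s := 1) (t := 1) (by simpa using hx) hx₀ (by simpa using hu) hu₀

lemma optimal_of_dotProduct_le {x : κ → R} {u : ι → R} (hx : b ≤ A *ᵥ x) (hx₀ : 0 ≤ x)
    (hu : u ᵥ* A ≤ c) (hu₀ : 0 ≤ u) (hgap : c ⬝ᵥ x ≤ b ⬝ᵥ u) :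
    (∀ x', b ≤ A *ᵥ x' → 0 ≤ x' → c ⬝ᵥ x ≤ c ⬝ᵥ x') ∧
      (∀ u', u' ᵥ* A ≤ c → 0 ≤ u' → b ⬝ᵥ u' ≤ b ⬝ᵥ u) ∧ c ⬝ᵥ x = b ⬝ᵥ u := by
  have hval := le_antisymm hgap (weak_duality hx hx₀ hu hu₀)
  refine ⟨fun x' hx' hx'₀ => ?_, fun u' hu' hu'₀ => ?_, hval⟩
  · exact hval ▸ weak_duality hx' hx'₀ hu hu₀
  · exact hval ▸ weak_duality hx hx₀ hu' hu'₀

lemma primalDualBound_le_mulVec_iff {x : κ → R} {u : ι → R} :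
    primalDualBound b c ≤ primalDualMatrix A b c *ᵥ Sum.elim x u ↔
      b ≤ A *ᵥ x ∧ u ᵥ* A ≤ c ∧ c ⬝ᵥ x ≤ b ⬝ᵥ u := by
  simp [primalDualBound, primalDualMatrix, fromRows_mulVec, fromBlocks_mulVec, neg_mulVec,
    mulVec_transpose, replicateRow_mulVec_eq_const, Sum.elim_le_elim_iff, and_assoc]

end OrderedRing

/-- When both programs are feasible, the primal-dual system admits no Farkas certificate
of infeasibility. -/
lemma dotProduct_le_of_vecMul_le_smul [Field R] [LinearOrder R] [IsStrictOrderedRing R]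
    {A : Matrix ι κ R} {b : ι → R} {c : κ → R} {x₀ r : κ → R} {u₀ p : ι → R} {μ : R}
    (hx₀ : b ≤ A *ᵥ x₀) (hx₀' : 0 ≤ x₀) (hu₀ : u₀ ᵥ* A ≤ c) (hu₀' : 0 ≤ u₀)
    (hp : 0 ≤ p) (hr : 0 ≤ r) (hμ : 0 ≤ μ) (hpA : p ᵥ* A ≤ μ • c) (hAr : μ • b ≤ A *ᵥ r) :
    b ⬝ᵥ p ≤ c ⬝ᵥ r := by
  rcases hμ.eq_or_lt with rfl | hμ
  · have hbp := weak_duality_smul (s := 1) (by simpa using hx₀) hx₀' hpA hp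
    have hcr := weak_duality_smul (t := 1) hAr hr (by simpa using hu₀) hu₀'
    simp only [one_mul, zero_mul] at hbp hcr
    linarith
  · exact le_of_mul_le_mul_left (weak_duality_smul hAr hr hpA hp) hμ

end Duality

/-- Strong duality for linear programming: if both primal and dual are feasible,
then both attain their optima and the optimal values coincide. -/
theorem lp_strong_duality
    {m n : ℕ} (A : Matrix (Fin m) (Fin n) ℝ) (b : Fin m → ℝ) (c : Fin n → ℝ)
    (hprimal : ∃ x : Fin n → ℝ, b ≤ A *ᵥ x ∧ 0 ≤ x)
    (hdual : ∃ u : Fin m → ℝ, u ᵥ* A ≤ c ∧ 0 ≤ u) :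
    ∃ (xstar : Fin n → ℝ) (ustar : Fin m → ℝ),
      (b ≤ A *ᵥ xstar ∧ 0 ≤ xstar) ∧ (ustar ᵥ* A ≤ c ∧ 0 ≤ ustar) ∧
      (∀ x : Fin n → ℝ, b ≤ A *ᵥ x → 0 ≤ x → c ⬝ᵥ xstar ≤ c ⬝ᵥ x) ∧
      (∀ u : Fin m → ℝ, u ᵥ* A ≤ c → 0 ≤ u → b ⬝ᵥ u ≤ b ⬝ᵥ ustar) ∧
      c ⬝ᵥ xstar = b ⬝ᵥ ustar := by
  obtain ⟨x₀, hx₀, hx₀'⟩ := hprimal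
  obtain ⟨u₀, hu₀, hu₀'⟩ := hdual
  by_cases hsys : ∃ z, 0 ≤ z ∧ primalDualBound b c ≤ primalDualMatrix A b c *ᵥ z
  · obtain ⟨z, hz, hbound⟩ := hsys
    rw [← Sum.elim_comp_inl_inr z, primalDualBound_le_mulVec_iff] at hbound
    obtain ⟨hx, hu, hgap⟩ := hbound
    have hx' : 0 ≤ z ∘ Sum.inl := fun j => hz _
    have hu' : 0 ≤ z ∘ Sum.inr := fun i => hz _
    exact ⟨_, _, ⟨hx, hx'⟩, ⟨hu, hu'⟩, optimal_of_dotProduct_le hx hx' hu hu' hgap⟩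
  · obtain ⟨y, hy, hyM, hby⟩ :=
      (primalDualMatrix A b c).exists_nonneg_vecMul_nonpos_of_not_exists _ hsys
    rw [vecMul_primalDualMatrix, ← Sum.elim_zero_zero, Sum.elim_le_elim_iff, sub_nonpos,
      sub_nonpos] at hyM
    rw [primalDualBound_dotProduct, sub_pos] at hby
    exact absurd (dotProduct_le_of_vecMul_le_smul hx₀ hx₀' hu₀ hu₀' (fun _ => hy _)
      (fun _ => hy _) (hy _) hyM.1 hyM.2) hby.not_ge
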